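/- arXiv:2201.07744 — 2 statements merged into one kernel-verified Lean document; each statement's English description precedes it below -/
import Mathlib

section
/- Suppose there exists a point y ∈ Ĵ(U_ad) + ℝ^k_≥ such that the set (y − ℝ^k_≥) ∩ (Ĵ(U_ad) + ℝ^k_≥) is compact. Then there exists a Pareto optimal point ū ∈ U_ad; in particular the Pareto front Ĵ(U_opt) is nonempty. -/
/-!
The set `J(Uad) + ℝ^k_≥` is the upper closure of `J(Uad)`. The coordinate sum is continuous and
strictly monotone, so a minimiser of it over the compact section `Iic y ∩ upperClosure (J(Uad))`
is a minimal element of that section; such a minimal element already lies in `J(Uad)` and is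
minimal there, i.e. it is a point of the Pareto front.
-/

open Set

theorem IsCompact.exists_minimal_of_strictMono {α β : Type*} [TopologicalSpace α] [Preorder α]
    [TopologicalSpace β] [LinearOrder β] [ClosedIicTopology β] {s : Set α} (hs : IsCompact s)
    (hne : s.Nonempty) {f : α → β} (hf : Continuous f) (hmono : StrictMono f) :
    ∃ x, Minimal (· ∈ s) x := by
  obtain ⟨x, hx, hmin⟩ := hs.exists_isMinOn hne hf.continuousOn
  exact ⟨x, MinimalFor.minimal_of_strictMonoOn (hmono.strictMonoOn _) ⟨hx, fun _ hy _ ↦ hmin hy⟩⟩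

theorem Minimal.minimal_of_Iic_inter_upperClosure {α : Type*} [PartialOrder α] {s : Set α}
    {y m : α} (hm : Minimal (· ∈ Iic y ∩ upperClosure s) m) : Minimal (· ∈ s) m := by
  obtain ⟨hmy, t, hts, htm⟩ := hm.prop
  have hmt : m = t := hm.eq_of_ge ⟨htm.trans hmy, t, hts, le_rfl⟩ htm
  subst hmt
  exact ⟨hts, fun u hus hum ↦ hm.le_of_le ⟨hum.trans hmy, u, hus, le_rfl⟩ hum⟩

theorem setOf_exists_add_nonneg_eq_upperClosure {ι α : Type*} [AddCommGroup α] [PartialOrder α]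
    [IsOrderedAddMonoid α] (s : Set ι) (f : ι → α) :
    {v | ∃ u ∈ s, ∃ d, 0 ≤ d ∧ v = f u + d} = upperClosure (f '' s) := by
  ext v
  constructor
  · rintro ⟨u, hu, d, hd, rfl⟩
    exact ⟨f u, mem_image_of_mem f hu, le_add_of_nonneg_right hd⟩
  · rintro ⟨_, ⟨u, hu, rfl⟩, hle⟩
    exact ⟨u, hu, v - f u, sub_nonneg.2 hle, (add_sub_cancel _ _).symm⟩

theorem pareto_front_nonempty_of_compact_section_general
    {U : Type*}
    {k : ℕ} (Uad : Set U)
    (J : U → (Fin k → ℝ))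
    (hcpt : ∃ y ∈ {v : Fin k → ℝ | ∃ u ∈ Uad, ∃ d : Fin k → ℝ, 0 ≤ d ∧ v = J u + d},
      IsCompact ({v : Fin k → ℝ | v ≤ y} ∩
        {v : Fin k → ℝ | ∃ u ∈ Uad, ∃ d : Fin k → ℝ, 0 ≤ d ∧ v = J u + d})) :
    ∃ ubar ∈ Uad, ∀ ut ∈ Uad, ¬ (J ut ≤ J ubar ∧ J ut ≠ J ubar) := by
  obtain ⟨y, hy, hK⟩ := hcpt
  rw [setOf_exists_add_nonneg_eq_upperClosure] at hy hK
  obtain ⟨m, hm⟩ := hK.exists_minimal_of_strictMono ⟨y, le_refl y, hy⟩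
    (continuous_finsetSum _ fun i _ ↦ continuous_apply i) Fintype.sum_strictMono
  have hmin : Minimal (· ∈ J '' Uad) m := hm.minimal_of_Iic_inter_upperClosure
  obtain ⟨ubar, hubar, rfl⟩ := hmin.prop
  exact ⟨ubar, hubar, fun ut hut ⟨hle, hne⟩ ↦ hne (hmin.eq_of_le ⟨ut, hut, rfl⟩ hle)⟩

/-- **Existence of Pareto optimal points.**
Let `U` be a real Hilbert space, `Uad ⊆ U` nonempty, `k ≥ 2` and
`J = (J_1, …, J_k) : U → ℝ^k` the multi-objective cost function.  If there is a point
`y ∈ J(Uad) + ℝ^k_≥` such that `(y − ℝ^k_≥) ∩ (J(Uad) + ℝ^k_≥)` is compact, then there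
exists a Pareto optimal point `ubar ∈ Uad`; in particular the Pareto front is nonempty. -/
theorem pareto_front_nonempty_of_compact_section
    {U : Type*} [NormedAddCommGroup U] [InnerProductSpace ℝ U] [CompleteSpace U]
    {k : ℕ} (hk : 2 ≤ k) (Uad : Set U) (hUad : Uad.Nonempty)
    (J : U → (Fin k → ℝ))
    (hcpt : ∃ y ∈ {v : Fin k → ℝ | ∃ u ∈ Uad, ∃ d : Fin k → ℝ, 0 ≤ d ∧ v = J u + d},
      IsCompact ({v : Fin k → ℝ | v ≤ y} ∩
        {v : Fin k → ℝ | ∃ u ∈ Uad, ∃ d : Fin k → ℝ, 0 ≤ d ∧ v = J u + d})) :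
    ∃ ubar ∈ Uad, ∀ ut ∈ Uad, ¬ (J ut ≤ J ubar ∧ J ut ≠ J ubar) :=
  pareto_front_nonempty_of_compact_section_general Uad J hcpt
end

section
/- Let z ∈ ℝ^k and r ∈ ℝ^k with r > 0 be arbitrary. (i) If (t̄, ū) is a local solution of the Pascoletti–Serafini problem (P^PS_{z,r}) — i.e. Ĵ(ū) − z ≤ t̄ r and there is a neighborhood W of (t̄, ū) in ℝ × U such that t̄ ≤ t for every (t,u) ∈ W with u ∈ U_ad and Ĵ(u) − z ≤ t r — then ū is a local minimizer of Ĵ^{g_{z,r}} over U_ad with local minimal value Ĵ^{g_{z,r}}(ū) = t̄. (ii) Conversely, if ū is a local minimizer of Ĵ^{g_{z,r}} over U_ad, then (t̄, ū) with t̄ := max_{1≤i≤k} (Ĵ_i(ū) − z_i)/r_i is a local solution of (P^PS_{z,r}). -/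
/-!
Since `r > 0`, the constraint `Ĵ(u) − z ≤ t r` says exactly `Ĵ^{g_{z,r}}(u) ≤ t`, so (P^PS_{z,r})
minimizes `t` over the epigraph of `g := Ĵ^{g_{z,r}}` restricted to `U_ad`. If `(t̄, ū)` is a local
solution and some admissible `u` near `ū` had `g u < t̄`, then `(s, u)` would be feasible for every
`s ∈ [g u, t̄)`, and such `s` can be chosen arbitrarily close to `t̄`; hence `t̄ ≤ g` near `ū`, which
forces `g ū = t̄` and local minimality. Conversely, a local minimizer `ū` of `g` gives
`g ū ≤ g u ≤ t` for every feasible `(t, u)` with `u` near `ū`.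
-/

open Topology

/-- The Pascoletti–Serafini scalarization function
`u ↦ max_{1 ≤ i ≤ k} (Ĵ_i(u) − z_i) / r_i`, evaluated at the objective vector `y`. -/
noncomputable def psScal {k : ℕ} (hk : 0 < k) (z r : Fin k → ℝ) (y : Fin k → ℝ) : ℝ :=
  Finset.univ.sup' (Finset.univ_nonempty_iff.mpr ⟨⟨0, hk⟩⟩) fun i => (y i - z i) / r i

open Filter

lemma psScal_le_iff {k : ℕ} (hk : 0 < k) (z r y : Fin k → ℝ) (hr : ∀ i, 0 < r i) (t : ℝ) :
    psScal hk z r y ≤ t ↔ ∀ i, y i - z i ≤ t * r i := by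
  simp only [psScal, Finset.sup'_le_iff, Finset.mem_univ, true_implies, div_le_iff₀ (hr _)]

lemma isLocalMinOn_iff_exists_mem_nhds {X β : Type*} [TopologicalSpace X] [Preorder β]
    {f : X → β} {s : Set X} {a : X} :
    IsLocalMinOn f s a ↔ ∃ V ∈ 𝓝 a, ∀ y ∈ V, y ∈ s → f a ≤ f y :=
  eventually_nhdsWithin_iff.trans eventually_iff_exists_mem

section Epigraph

variable {X α : Type*} [TopologicalSpace X] [LinearOrder α] [TopologicalSpace α]
  [OrderTopology α] [DenselyOrdered α] {g : X → α} {S : Set X} {x : X} {t : α}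

lemma eventually_le_of_isLocalMinOn_fst_epigraph
    (h : IsLocalMinOn Prod.fst {p : α × X | p.2 ∈ S ∧ g p.2 ≤ p.1} (t, x)) :
    ∀ᶠ u in 𝓝[S] x, t ≤ g u := by
  rw [IsLocalMinOn, IsMinFilter, eventually_nhdsWithin_iff, nhds_prod_eq,
    eventually_prod_iff] at h
  obtain ⟨P, hP, Q, hQ, hPQ⟩ := h
  rw [eventually_nhdsWithin_iff]
  filter_upwards [hQ] with u hu huS
  by_contra! hgu
  obtain ⟨l, hlt, hl⟩ := exists_Ioc_subset_of_mem_nhds hP ⟨g u, hgu⟩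
  obtain ⟨s, hs, hst⟩ := exists_between (max_lt hlt hgu)
  have hsP : P s := hl ⟨(le_max_left _ _).trans_lt hs, hst.le⟩
  exact hst.not_ge (hPQ hsP hu ⟨huS, ((le_max_right _ _).trans_lt hs).le⟩)

theorem isLocalMinOn_fst_epigraph_iff (hx : x ∈ S) (ht : g x ≤ t) :
    IsLocalMinOn Prod.fst {p : α × X | p.2 ∈ S ∧ g p.2 ≤ p.1} (t, x) ↔
      IsLocalMinOn g S x ∧ g x = t := by
  constructor
  · intro h
    have hle := eventually_le_of_isLocalMinOn_fst_epigraph h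
    have hgx : g x = t := ht.antisymm (hle.self_of_nhdsWithin hx)
    exact ⟨hle.mono fun u hu => hgx ▸ hu, hgx⟩
  · rintro ⟨hmin, rfl⟩
    have hsnd : Tendsto Prod.snd (𝓝[{p : α × X | p.2 ∈ S ∧ g p.2 ≤ p.1}] (g x, x)) (𝓝[S] x) :=
      continuous_snd.continuousWithinAt.tendsto_nhdsWithin fun p hp => hp.1
    filter_upwards [hsnd.eventually hmin, self_mem_nhdsWithin] with p hp hpE
    exact hp.trans hpE.2

end Epigraph

/-- **Equivalence of the PS problem and its reformulation (local version).**
(i) If `(tbar, ubar)` is a local solution of the Pascoletti–Serafini problem, i.e.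
`J(ubar) − z ≤ tbar r` and there is a neighborhood `W` of `(tbar, ubar)` in `ℝ × U`
such that `tbar ≤ t` for every feasible `(t, u) ∈ W` with `u ∈ Uad`, then `ubar` is a
local minimizer of `Ĵ^{g_{z,r}}` over `Uad` with local minimal value
`Ĵ^{g_{z,r}}(ubar) = tbar`.
(ii) Conversely, if `ubar` is a local minimizer of `Ĵ^{g_{z,r}}` over `Uad`, then
`(tbar, ubar)` with `tbar := max_i (J_i(ubar) − z_i)/r_i` is a local solution of the
PS problem. -/
theorem psProblem_local_solution_iff_reformulated
    {U : Type*} [NormedAddCommGroup U]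
    {k : ℕ} (hk : 2 ≤ k) (Uad : Set U)
    (J : U → Fin k → ℝ) (z r : Fin k → ℝ) (hr : ∀ i, 0 < r i)
    (ubar : U) (hubar : ubar ∈ Uad) :
    (∀ tbar : ℝ, (∀ i, J ubar i - z i ≤ tbar * r i) →
      (∃ W ∈ 𝓝 ((tbar, ubar) : ℝ × U), ∀ p ∈ W, p.2 ∈ Uad →
        (∀ i, J p.2 i - z i ≤ p.1 * r i) → tbar ≤ p.1) →
      ((∃ V ∈ 𝓝 ubar, ∀ u ∈ V, u ∈ Uad →
          psScal (by omega) z r (J ubar) ≤ psScal (by omega) z r (J u)) ∧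
        psScal (by omega : 0 < k) z r (J ubar) = tbar)) ∧
    ((∃ V ∈ 𝓝 ubar, ∀ u ∈ V, u ∈ Uad →
        psScal (by omega) z r (J ubar) ≤ psScal (by omega) z r (J u)) →
      ((∀ i, J ubar i - z i ≤ psScal (by omega : 0 < k) z r (J ubar) * r i) ∧
        ∃ W ∈ 𝓝 ((psScal (by omega : 0 < k) z r (J ubar), ubar) : ℝ × U),
          ∀ p ∈ W, p.2 ∈ Uad → (∀ i, J p.2 i - z i ≤ p.1 * r i) →
            psScal (by omega : 0 < k) z r (J ubar) ≤ p.1)) := by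
  have hk0 : 0 < k := by omega
  set g : U → ℝ := fun u => psScal hk0 z r (J u)
  have hfeas (u : U) (t : ℝ) : (∀ i, J u i - z i ≤ t * r i) ↔ g u ≤ t :=
    (psScal_le_iff hk0 z r (J u) hr t).symm
  have hPS (t : ℝ) : (∃ W ∈ 𝓝 (t, ubar), ∀ p ∈ W, p.2 ∈ Uad →
      (∀ i, J p.2 i - z i ≤ p.1 * r i) → t ≤ p.1) ↔
      IsLocalMinOn Prod.fst {p : ℝ × U | p.2 ∈ Uad ∧ g p.2 ≤ p.1} (t, ubar) := by
    simp only [isLocalMinOn_iff_exists_mem_nhds, hfeas, Set.mem_ofPred_eq, and_imp]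
  refine ⟨fun t ht hW => ?_, fun hV => ?_⟩
  · rw [hPS, isLocalMinOn_fst_epigraph_iff hubar ((hfeas ubar t).1 ht)] at hW
    exact ⟨isLocalMinOn_iff_exists_mem_nhds.1 hW.1, hW.2⟩
  · have hmin : IsLocalMinOn g Uad ubar := isLocalMinOn_iff_exists_mem_nhds.2 hV
    exact ⟨(hfeas ubar _).2 le_rfl,
      (hPS _).2 ((isLocalMinOn_fst_epigraph_iff hubar le_rfl).2 ⟨hmin, rfl⟩)⟩
end
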